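/- Let X be a topological space and x₀ ∈ X. Define π₁^{fu}(X,x₀) as the intersection, over all fibrations p : E → X with path connected total space E having the unique path lifting property (upl) and all points e ∈ p⁻¹(x₀), of the image subgroups p₊(π₁(E,e)) ≤ π₁(X,x₀); define π₁^{fwu}(X,x₀) analogously with fibrations having the weakly unique path homotopically lifting property (wuphl) in place of upl. Then π₁^{fwu}(X,x₀) and π₁^{fu}(X,x₀) are normal subgroups of π₁(X,x₀), and π₁^{fwu}(X,x₀) ≤ π₁^{fu}(X,x₀). -/

import Mathlib

universe u

open scoped unitInterval

/-- `p` has the unique path lifting property (upl). -/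
def Upl {E B : Type*} [TopologicalSpace E] [TopologicalSpace B] (p : C(E, B)) : Prop :=
  ∀ α β : C(unitInterval, E), α 0 = β 0 → p.comp α = p.comp β → α = β

/-- `p` has the weakly unique path homotopically lifting property (wuphl). -/
def Wuphl {E B : Type*} [TopologicalSpace E] [TopologicalSpace B] (p : C(E, B)) : Prop :=
  ∀ α β : C(unitInterval, E), α 0 = β 0 → α 1 = β 1 →
    (p.comp α).HomotopicRel (p.comp β) {0, 1} →
    α.HomotopicRel β {0, 1}

/-- `p` is a (Hurewicz) fibration: it has the homotopy lifting property with respect to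
every topological space. -/
def IsFibration {E B : Type*} [TopologicalSpace E] [TopologicalSpace B] (p : C(E, B)) : Prop :=
  ∀ (X : Type u) [TopologicalSpace X] (f : C(X, E)) (F : C(X × unitInterval, B)),
    (∀ x, F (x, 0) = p (f x)) →
    ∃ F' : C(X × unitInterval, E), (∀ z, p (F' z) = F z) ∧ (∀ x, F' (x, 0) = f x)

/-- The homomorphism induced by a continuous map `p` on fundamental groups. -/
noncomputable def inducedPi1Hom {E B : Type u} [TopologicalSpace E] [TopologicalSpace B]
    (p : C(E, B)) (e : E) :
    FundamentalGroup E e →* FundamentalGroup B (p e) :=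
  CategoryTheory.Functor.mapEnd _
    (FundamentalGroupoid.fundamentalGroupoidFunctor.map
      (X := TopCat.of E) (Y := TopCat.of B) (TopCat.ofHom p))

/-- The fu-subgroup: the intersection of the image subgroups of all fibrations with upl and
path connected total space over `X`. -/
noncomputable def pi1Fu (X : Type u) [TopologicalSpace X] (x₀ : X) :
    Subgroup (FundamentalGroup X x₀) :=
  sInf { H | ∃ (E : TopCat.{u}) (_ : PathConnectedSpace E) (p : C(E, X)) (e : E)
      (he : p e = x₀), IsFibration.{u} p ∧ Upl p ∧ H = he ▸ (inducedPi1Hom p e).range }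

/-- The fwu-subgroup: the intersection of the image subgroups of all fibrations with wuphl and
path connected total space over `X`. -/
noncomputable def pi1Fwu (X : Type u) [TopologicalSpace X] (x₀ : X) :
    Subgroup (FundamentalGroup X x₀) :=
  sInf { H | ∃ (E : TopCat.{u}) (_ : PathConnectedSpace E) (p : C(E, X)) (e : E)
      (he : p e = x₀), IsFibration.{u} p ∧ Wuphl p ∧ H = he ▸ (inducedPi1Hom p e).range }

/-! A fibration lifts every loop class `g` at `p e` to a path from `e` to some `e'` in the same
fibre; conjugating by the lift shows that `g` conjugates the image subgroup at `e'` into the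
image subgroup at `e`, so the intersection over all fibre points is normal. A fibration with
unique path lifting has wuphl: lift a homotopy rel endpoints between the projected paths; by
uniqueness its sides are constant and its end is the second path. Hence every upl fibration
counts for `pi1Fwu`, which is therefore smaller than `pi1Fu`. -/

open CategoryTheory FundamentalGroupoid

theorem Subgroup.normal_sInf_of_exists_conj_mem {G : Type*} [Group G] {S : Set (Subgroup G)}
    (hS : ∀ H ∈ S, ∀ g : G, ∃ K ∈ S, ∀ n ∈ K, g * n * g⁻¹ ∈ H) : (sInf S).Normal where
  conj_mem n hn g := Subgroup.mem_sInf.2 fun H hH => by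
    obtain ⟨K, hK, hKH⟩ := hS H hH g
    exact hKH n (Subgroup.mem_sInf.1 hn K hK)

theorem CategoryTheory.Functor.comp_mem_range_mapEnd {C D : Type*} [Groupoid C] [Groupoid D]
    (F : C ⥤ D) {x y : C} (f : x ⟶ y) (g : y ⟶ x) {c : End (F.obj y)}
    (hc : c ∈ (F.mapEnd y).range) :
    (F.map f ≫ c ≫ F.map g : End (F.obj x)) ∈ (F.mapEnd x).range := by
  obtain ⟨c, rfl⟩ := hc
  exact ⟨f ≫ c ≫ g, by simp [Functor.mapEnd]⟩

namespace IsFibration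

section

variable {E B : Type*} [TopologicalSpace E] [TopologicalSpace B] {p : C(E, B)}

theorem exists_path_lift (hp : IsFibration.{u} p) (e : E) {b : B} (γ : Path (p e) b) :
    ∃ (e' : E) (h : p e' = b) (δ : Path e e'), δ.map p.continuous = γ.cast rfl h := by
  obtain ⟨F, hpF, hF₀⟩ := hp PUnit (.const _ e) (γ.toContinuousMap.comp ⟨Prod.snd, by fun_prop⟩)
    (fun _ => by simp)
  refine ⟨F (.unit, 1), by simp [hpF], ⟨⟨fun t => F (.unit, t), by fun_prop⟩, hF₀ _, rfl⟩, ?_⟩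
  ext t
  exact hpF _

theorem exists_homotopy_lift (hp : IsFibration.{u} p) {f₀ f₁ : C(I, B)} (K : f₀.Homotopy f₁)
    (α : C(I, E)) (hα : p.comp α = f₀) :
    ∃ H : C(I × I, E), (∀ z, p (H z) = K z) ∧ ∀ s, H (0, s) = α s := by
  obtain ⟨H, hpH, hH₀⟩ := hp (ULift I) (α.comp ⟨ULift.down, continuous_uliftDown⟩)
    (K.toContinuousMap.comp ⟨fun z => (z.2, z.1.down), by fun_prop⟩) (fun s => by simp [← hα])
  exact ⟨H.comp ⟨fun z => (ULift.up z.2, z.1), by fun_prop⟩, fun _ => hpH _, fun _ => hH₀ _⟩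

theorem wuphl_of_upl (hp : IsFibration.{u} p) (hupl : Upl p) : Wuphl p := by
  rintro α β h₀ - ⟨K⟩
  obtain ⟨H, hpH, hH₀⟩ := exists_homotopy_lift hp K.toHomotopy α rfl
  have hsides : ∀ s ∈ ({0, 1} : Set I), ∀ t, H (t, s) = α s := fun s hs t =>
    DFunLike.congr_fun (hupl ⟨fun t => H (t, s), by fun_prop⟩ (.const I (α s)) (hH₀ s)
      (ContinuousMap.ext fun t => by simp [hpH, K.eq_fst t hs])) t
  have hend : (⟨fun s => H (1, s), by fun_prop⟩ : C(I, E)) = β :=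
    hupl _ _ ((hsides 0 (by simp) 1).trans h₀) (ContinuousMap.ext fun s => by simp [hpH])
  exact ⟨{ toFun := H
           map_zero_left := hH₀
           map_one_left := DFunLike.congr_fun hend
           prop' := fun t s hs => hsides s hs t }⟩

end

variable {E B : Type u} [TopologicalSpace E] [TopologicalSpace B] {p : C(E, B)}

theorem conj_mem_range_inducedPi1Hom_of_map_eq_cast {e e' : E} {b : B} (δ : Path e e')
    (γ : Path (p e) b) (h : p e' = b) (hδ : δ.map p.continuous = γ.cast rfl h)
    {n : FundamentalGroup B b} (hn : n ∈ h ▸ (inducedPi1Hom p e').range) :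
    ((Path.Homotopic.Quotient.mk γ ≫ n ≫ Path.Homotopic.Quotient.mk γ.symm :
      mk (p e) ⟶ mk (p e)) : FundamentalGroup B (p e)) ∈
      (inducedPi1Hom p e).range := by
  subst h
  obtain rfl : δ.map p.continuous = γ := hδ
  exact Functor.comp_mem_range_mapEnd (πₘ (TopCat.ofHom p)) (Path.Homotopic.Quotient.mk δ)
    (Path.Homotopic.Quotient.mk δ.symm) hn

theorem exists_conj_mem_range_inducedPi1Hom (hp : IsFibration.{u} p) (e : E)
    (g : FundamentalGroup B (p e)) :
    ∃ (e' : E) (he' : p e' = p e),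
      ∀ n ∈ he' ▸ (inducedPi1Hom p e').range, g * n * g⁻¹ ∈ (inducedPi1Hom p e).range := by
  obtain ⟨γ, rfl⟩ := Path.Homotopic.Quotient.mk_surjective g
  obtain ⟨e', he', δ, hδ⟩ := exists_path_lift hp e γ.symm
  refine ⟨e', he', fun n hn => ?_⟩
  have hconj := conj_mem_range_inducedPi1Hom_of_map_eq_cast δ γ.symm he' hδ hn
  rw [Path.symm_symm] at hconj
  rw [FundamentalGroup.inv_def, ← Path.Homotopic.Quotient.mk_symm]
  exact hconj

end IsFibration

/-- `pi1Fu X x₀` and `pi1Fwu X x₀` are by definition `sInf (fibrationImages X x₀ Q)` for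
`Q = Upl` and `Q = Wuphl`. -/
def fibrationImages (X : Type u) [TopologicalSpace X] (x₀ : X)
    (Q : ∀ E : TopCat.{u}, C(E, X) → Prop) : Set (Subgroup (FundamentalGroup X x₀)) :=
  { H | ∃ (E : TopCat.{u}) (_ : PathConnectedSpace E) (p : C(E, X)) (e : E)
      (he : p e = x₀), IsFibration.{u} p ∧ Q E p ∧ H = he ▸ (inducedPi1Hom p e).range }

theorem fibrationImages_mono {X : Type u} [TopologicalSpace X] {x₀ : X}
    {Q Q' : ∀ E : TopCat.{u}, C(E, X) → Prop}
    (h : ∀ (E : TopCat.{u}) (p : C(E, X)), IsFibration.{u} p → Q E p → Q' E p) :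
    fibrationImages X x₀ Q ⊆ fibrationImages X x₀ Q' := by
  rintro H ⟨E, hE, p, e, he, hp, hQ, rfl⟩
  exact ⟨E, hE, p, e, he, hp, h E p hp hQ, rfl⟩

theorem sInf_fibrationImages_normal (X : Type u) [TopologicalSpace X] (x₀ : X)
    (Q : ∀ E : TopCat.{u}, C(E, X) → Prop) : (sInf (fibrationImages X x₀ Q)).Normal := by
  refine Subgroup.normal_sInf_of_exists_conj_mem ?_
  rintro H ⟨E, hE, p, e, rfl, hp, hQ, rfl⟩ g
  obtain ⟨e', he', hconj⟩ := IsFibration.exists_conj_mem_range_inducedPi1Hom hp e g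
  exact ⟨_, ⟨E, hE, p, e', he', hp, hQ, rfl⟩, hconj⟩

theorem pi1Fwu_le_pi1Fu_and_normal (X : Type u) [TopologicalSpace X] (x₀ : X) :
    (pi1Fwu X x₀).Normal ∧ (pi1Fu X x₀).Normal ∧ pi1Fwu X x₀ ≤ pi1Fu X x₀ :=
  ⟨sInf_fibrationImages_normal X x₀ fun _ p => Wuphl p,
    sInf_fibrationImages_normal X x₀ fun _ p => Upl p,
    sInf_le_sInf (fibrationImages_mono fun _ _ hp hupl => IsFibration.wuphl_of_upl hp hupl)⟩
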